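/- For every strongly binary tree T, N(T) ≥ 2^{s(T)}; equivalently, the number of cherries satisfies s(T) ≤ log₂ N(T). -/
import Mathlib


/-- A strongly binary tree: either a single leaf, or an internal node with an
ordered pair of strongly binary subtrees. -/
inductive SBTree where
  | leaf : SBTree
  | node : SBTree → SBTree → SBTree
deriving DecidableEq

/-- The number of cuts `N(T)` of a strongly binary tree. -/
def SBTree.ncuts : SBTree → ℕ
  | .leaf => 1
  | .node l r => 1 + l.ncuts * r.ncuts

/-- The number of cherries `s(T)`: internal nodes both of whose children are leaves
(equivalently, the number of pairs of sibling leaves `|L_s(T)|`). -/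
def SBTree.cherries : SBTree → ℕ
  | .leaf => 0
  | .node .leaf .leaf => 1
  | .node l r => l.cherries + r.cherries

lemma aux_pow_le (T : SBTree) : 2 ^ T.cherries ≤ T.ncuts := by
  induction T with
  | leaf => simp [SBTree.ncuts, SBTree.cherries]
  | node l r hl hr =>
    match l, r with
    | .leaf, .leaf => simp [SBTree.ncuts, SBTree.cherries]
    | .leaf, .node a b =>
      simp only [SBTree.ncuts, SBTree.cherries, pow_add]
      calc 2 ^ SBTree.leaf.cherries * 2 ^ (SBTree.node a b).cherries
          ≤ SBTree.leaf.ncuts * (SBTree.node a b).ncuts := Nat.mul_le_mul hl hr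
        _ ≤ 1 + SBTree.leaf.ncuts * (SBTree.node a b).ncuts := Nat.le_add_left _ _
    | .node a b, r =>
      simp only [SBTree.ncuts, SBTree.cherries, pow_add]
      calc 2 ^ (SBTree.node a b).cherries * 2 ^ r.cherries
          ≤ (SBTree.node a b).ncuts * r.ncuts := Nat.mul_le_mul hl hr
        _ ≤ 1 + (SBTree.node a b).ncuts * r.ncuts := Nat.le_add_left _ _

/-- For every strongly binary tree `T`, `N(T) ≥ 2^(s T)`; equivalently, the number
of cherries satisfies `s(T) ≤ log₂ N(T)`. -/
theorem two_pow_cherries_le_ncuts (T : SBTree) :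
    2 ^ T.cherries ≤ T.ncuts ∧ (T.cherries : ℝ) ≤ Real.logb 2 (T.ncuts : ℝ) := by
  have h := aux_pow_le T
  refine ⟨h, ?_⟩
  have h2 : ((2:ℝ)) ^ T.cherries ≤ (T.ncuts : ℝ) := by exact_mod_cast h
  calc (T.cherries : ℝ) = Real.logb 2 ((2:ℝ) ^ T.cherries) := by
        rw [Real.logb_pow, Real.logb_self_eq_one (by norm_num : (1:ℝ) < 2)]; ring
    _ ≤ Real.logb 2 (T.ncuts : ℝ) :=
        Real.logb_le_logb_of_le (by norm_num : (1:ℝ) < 2) (by positivity) h2
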